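/- Let ((E, λ), T, k, t) be a yes-instance of Threshold Adjustment, and let x₀ ∈ ℝ be smaller than e[j] for every example e of E and every feature j ∈ {1, …, d}. Then there is a solution in which every adjusted threshold is taken from the data values: there is a decision tree with at most t errors on (E, λ) obtained from T by relabeling leaves arbitrarily and changing the thresholds of at most k cuts, where each cut v whose threshold is changed receives a new threshold from the finite set {e[feat(v)] : e ∈ E} ∪ {x₀}. -/
import Mathlib


/-- Decision trees with features of type `α`: each leaf carries a class label
(`true` = blue, `false` = red), each internal node (a *cut*) carries a feature
and a real threshold. -/
inductive DTree (α : Type) : Type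
  | leaf (label : Bool) : DTree α
  | node (feat : α) (thr : ℝ) (left right : DTree α) : DTree α

namespace DTree

/-- The class that the tree assigns to the example `e`. -/
noncomputable def classify {α : Type} : DTree α → (α → ℝ) → Bool
  | leaf c, _ => c
  | node f x l r, e => if e f ≤ x then l.classify e else r.classify e

end DTree

/-- The number of errors of `T` on the training data set `(E, lab)`. -/
noncomputable def errorCount {α ι : Type} [Fintype ι] (E : ι → α → ℝ)
    (lab : ι → Bool) (T : DTree α) : ℕ :=
  (Finset.univ.filter (fun i => T.classify (E i) ≠ lab i)).card

/-- `T'` has the same shape as `T` and the same feature at every cut; thresholds and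
leaf labels may differ. -/
def SameShapeFeat {α : Type} : DTree α → DTree α → Prop
  | DTree.leaf _, DTree.leaf _ => True
  | DTree.node f _ l r, DTree.node f' _ l' r' =>
      f = f' ∧ SameShapeFeat l l' ∧ SameShapeFeat r r'
  | _, _ => False

/-- The number of cuts at which the thresholds of the two (same-shaped) trees differ,
i.e. the number of threshold adjustments needed to turn `T` into `T'`. -/
noncomputable def adjCost {α : Type} : DTree α → DTree α → ℕ
  | DTree.node _ x l r, DTree.node _ x' l' r' =>
      (if x = x' then 0 else 1) + adjCost l l' + adjCost r r'
  | _, _ => 0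

/-- The Threshold Adjustment instance `((E, lab), T, k, t)` is a yes-instance:
by performing threshold adjustments on at most `k` cuts of `T` and additionally
relabeling the leaves of `T` arbitrarily, one can obtain a decision tree with at
most `t` errors on `(E, lab)`. -/
def TAYes {α ι : Type} [Fintype ι] (E : ι → α → ℝ) (lab : ι → Bool)
    (T : DTree α) (k t : ℕ) : Prop :=
  ∃ T' : DTree α, SameShapeFeat T T' ∧ adjCost T T' ≤ k ∧ errorCount E lab T' ≤ t

/-- Every cut of `T'` either keeps the threshold it has in `T` (same-positioned cut),
or its new threshold belongs to `{e (feat v) : e ∈ E} ∪ {x₀}`. -/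
def ThrFromData {α ι : Type} (E : ι → α → ℝ) (x₀ : ℝ) :
    DTree α → DTree α → Prop
  | DTree.node f x l r, DTree.node _ x' l' r' =>
      (x' = x ∨ x' = x₀ ∨ ∃ i : ι, x' = E i f)
        ∧ ThrFromData E x₀ l l' ∧ ThrFromData E x₀ r r'
  | _, _ => True

/-- Snap a threshold down to the largest data value `≤ x'`, or `x₀` if none. -/
noncomputable def snap {α ι : Type} [Fintype ι] (E : ι → α → ℝ) (x₀ : ℝ)
    (f : α) (x' : ℝ) : ℝ :=
  if h : ((Finset.univ.image fun i => E i f).filter (· ≤ x')).Nonempty then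
    ((Finset.univ.image fun i => E i f).filter (· ≤ x')).max' h
  else x₀

lemma snap_mem {α ι : Type} [Fintype ι] (E : ι → α → ℝ) (x₀ : ℝ)
    (f : α) (x' : ℝ) : snap E x₀ f x' = x₀ ∨ ∃ i, snap E x₀ f x' = E i f := by
  unfold snap
  split
  · rename_i h
    right
    have := Finset.max'_mem _ h
    simp only [Finset.mem_filter, Finset.mem_image, Finset.mem_univ, true_and] at this
    obtain ⟨⟨i, hi⟩, -⟩ := this
    exact ⟨i, hi.symm⟩
  · exact Or.inl rfl

lemma le_snap_iff {α ι : Type} [Fintype ι] (E : ι → α → ℝ) (x₀ : ℝ)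
    (hx₀ : ∀ (i : ι) (j : α), x₀ < E i j) (f : α) (x' : ℝ) (i : ι) :
    E i f ≤ snap E x₀ f x' ↔ E i f ≤ x' := by
  unfold snap
  split
  · rename_i h
    constructor
    · intro hle
      have hmax := Finset.max'_mem _ h
      simp only [Finset.mem_filter] at hmax
      exact hle.trans hmax.2
    · intro hle
      apply Finset.le_max'
      simp only [Finset.mem_filter, Finset.mem_image, Finset.mem_univ, true_and]
      exact ⟨⟨i, rfl⟩, hle⟩
  · rename_i h
    constructor
    · intro hle; exact absurd (hx₀ i f) (not_lt.mpr hle)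
    · intro hle
      exact absurd ⟨E i f, by simp [hle]⟩ h

/-- Replace each changed threshold of `T'` by its snapped value. -/
noncomputable def snapTree {α ι : Type} [Fintype ι] (E : ι → α → ℝ) (x₀ : ℝ) :
    DTree α → DTree α → DTree α
  | DTree.node _ x l r, DTree.node f' x' l' r' =>
      DTree.node f' (if x = x' then x else snap E x₀ f' x')
        (snapTree E x₀ l l') (snapTree E x₀ r r')
  | _, T' => T'

lemma snapTree_shape {α ι : Type} [Fintype ι] (E : ι → α → ℝ) (x₀ : ℝ) :
    ∀ (T T' : DTree α), SameShapeFeat T T' →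
      SameShapeFeat T (snapTree E x₀ T T')
  | DTree.leaf _, DTree.leaf _, _ => trivial
  | DTree.node f x l r, DTree.node f' x' l' r', h => by
      obtain ⟨hf, hl, hr⟩ := h
      exact ⟨hf, snapTree_shape E x₀ l l' hl, snapTree_shape E x₀ r r' hr⟩

lemma snapTree_adjCost {α ι : Type} [Fintype ι] (E : ι → α → ℝ) (x₀ : ℝ) :
    ∀ (T T' : DTree α), adjCost T (snapTree E x₀ T T') ≤ adjCost T T'
  | DTree.leaf _, _ => le_refl _
  | DTree.node _ _ _ _, DTree.leaf _ => le_refl _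
  | DTree.node f x l r, DTree.node f' x' l' r' => by
      show (if x = (if x = x' then x else snap E x₀ f' x') then 0 else 1)
          + adjCost l (snapTree E x₀ l l') + adjCost r (snapTree E x₀ r r')
          ≤ (if x = x' then 0 else 1) + adjCost l l' + adjCost r r'
      have h1 : (if x = (if x = x' then x else snap E x₀ f' x') then 0 else 1)
          ≤ (if x = x' then (0:ℕ) else 1) := by
        by_cases hxx : x = x'
        · simp [hxx]
        · simp only [if_neg hxx]
          split <;> omega
      exact Nat.add_le_add (Nat.add_le_add h1 (snapTree_adjCost E x₀ l l'))
        (snapTree_adjCost E x₀ r r')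

lemma snapTree_thr {α ι : Type} [Fintype ι] (E : ι → α → ℝ) (x₀ : ℝ) :
    ∀ (T T' : DTree α), SameShapeFeat T T' →
      ThrFromData E x₀ T (snapTree E x₀ T T')
  | DTree.leaf _, DTree.leaf _, _ => trivial
  | DTree.node f x l r, DTree.node f' x' l' r', h => by
      obtain ⟨hf, hl, hr⟩ := h
      subst hf
      refine ⟨?_, snapTree_thr E x₀ l l' hl, snapTree_thr E x₀ r r' hr⟩
      by_cases hxx : x = x'
      · simp [hxx]
      · simp only [if_neg hxx]
        rcases snap_mem E x₀ f x' with h0 | ⟨i, hi⟩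
        · exact Or.inr (Or.inl h0)
        · exact Or.inr (Or.inr ⟨i, hi⟩)

lemma snapTree_classify {α ι : Type} [Fintype ι] (E : ι → α → ℝ) (x₀ : ℝ)
    (hx₀ : ∀ (i : ι) (j : α), x₀ < E i j) :
    ∀ (T T' : DTree α) (i : ι),
      (snapTree E x₀ T T').classify (E i) = T'.classify (E i)
  | DTree.leaf _, _, _ => rfl
  | DTree.node _ _ _ _, DTree.leaf _, _ => rfl
  | DTree.node f x l r, DTree.node f' x' l' r', i => by
      show (if E i f' ≤ (if x = x' then x else snap E x₀ f' x') then
          (snapTree E x₀ l l').classify (E i) else (snapTree E x₀ r r').classify (E i))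
          = (if E i f' ≤ x' then l'.classify (E i) else r'.classify (E i))
      rw [snapTree_classify E x₀ hx₀ l l' i, snapTree_classify E x₀ hx₀ r r' i]
      by_cases hxx : x = x'
      · simp [hxx]
      · rw [if_neg hxx]
        by_cases hle : E i f' ≤ x'
        · rw [if_pos hle, if_pos ((le_snap_iff E x₀ hx₀ f' x' i).mpr hle)]
        · rw [if_neg hle, if_neg (fun hc => hle ((le_snap_iff E x₀ hx₀ f' x' i).mp hc))]

/-- If `((E, lab), T, k, t)` is a yes-instance of Threshold Adjustment
and `x₀` is smaller than `e j` for every example `e` of `E` and every feature `j`, then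
there is a solution in which every adjusted threshold is taken from the data values:
a decision tree with at most `t` errors obtained from `T` by relabeling leaves
arbitrarily and changing the thresholds of at most `k` cuts, where each cut `v` whose
threshold is changed receives a new threshold from `{e (feat v) : e ∈ E} ∪ {x₀}`. -/
theorem stmt3 {α ι : Type} [Fintype ι] (E : ι → α → ℝ) (lab : ι → Bool)
    (T : DTree α) (k t : ℕ) (x₀ : ℝ) (hx₀ : ∀ (i : ι) (j : α), x₀ < E i j)
    (h : TAYes E lab T k t) :
    ∃ T' : DTree α, SameShapeFeat T T' ∧ adjCost T T' ≤ k ∧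
      ThrFromData E x₀ T T' ∧ errorCount E lab T' ≤ t := by
  obtain ⟨T', hshape, hcost, herr⟩ := h
  refine ⟨snapTree E x₀ T T', snapTree_shape E x₀ T T' hshape,
    (snapTree_adjCost E x₀ T T').trans hcost, snapTree_thr E x₀ T T' hshape, ?_⟩
  have : errorCount E lab (snapTree E x₀ T T') = errorCount E lab T' := by
    unfold errorCount
    congr 1
    apply Finset.filter_congr
    intro i _
    rw [snapTree_classify E x₀ hx₀ T T' i]
  exact this ▸ herr
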